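/- arXiv:2306.11514 — 3 statements merged into one kernel-verified Lean document; each statement's English description precedes it below -/
import Mathlib

section
/- Let λ_1 > ... > λ_n be distinct real numbers, with Q_j the interpolation polynomial taking value 1 at λ_i for i ≤ j and 0 for i > j. Define the kernel K(x,y) = ∑_{j=1}^{n−1} 1_{I_j}(x) Q_j'(y), where I_j = [λ_{j+1}, λ_j]. Then K is a rank n−1 projection kernel: ∫_R K(x,y) K(y,z) dy = K(x,z) for all x, z ∈ R, and ∫_R K(y,y) dy = n−1. -/
open MeasureTheory
open scoped BigOperators

lemma stmt6_eq_indicator (a b : ℝ) (p : Polynomial ℝ) :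
    (fun y : ℝ => p.eval y * Set.indicator (Set.Icc a b) (fun _ => (1:ℝ)) y)
      = Set.indicator (Set.Icc a b) (fun y => p.eval y) := by
  funext y
  by_cases h : y ∈ Set.Icc a b <;>
    simp [Set.indicator_of_mem, Set.indicator_of_notMem, h]

lemma stmt6_integrable (a b : ℝ) (p : Polynomial ℝ) :
    Integrable (fun y : ℝ => p.eval y *
      Set.indicator (Set.Icc a b) (fun _ => (1:ℝ)) y) := by
  rw [stmt6_eq_indicator]
  exact (p.continuous.integrableOn_Icc).integrable_indicator measurableSet_Icc

lemma stmt6_integral (a b : ℝ) (hab : a ≤ b) (p : Polynomial ℝ) :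
    (∫ y : ℝ, (Polynomial.derivative p).eval y *
      Set.indicator (Set.Icc a b) (fun _ => (1:ℝ)) y) = p.eval b - p.eval a := by
  rw [stmt6_eq_indicator, integral_indicator measurableSet_Icc,
    MeasureTheory.integral_Icc_eq_integral_Ioc, ← intervalIntegral.integral_of_le hab]
  have hderiv : ∀ x ∈ Set.uIcc a b, HasDerivAt (fun y => p.eval y)
      ((Polynomial.derivative p).eval x) x := fun x _ => p.hasDerivAt x
  rw [intervalIntegral.integral_eq_sub_of_hasDerivAt hderiv
    ((Polynomial.derivative p).continuous.intervalIntegrable a b)]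

/-- The kernel `K(x,y) = ∑_{j=1}^{n-1} 1_{I_j}(x) Q_j'(y)` is a rank `n-1` projection:
`∫ K(x,y)K(y,z) dy = K(x,z)` for all `x, z`, and `∫ K(y,y) dy = n-1`. -/
theorem stmt6 (n : ℕ) (hn : 1 ≤ n) (l : ℕ → ℝ)
    (hl : ∀ i j, 1 ≤ i → i < j → j ≤ n → l j < l i)
    (Q : ℕ → Polynomial ℝ)
    (hQdeg : ∀ j, 1 ≤ j → j ≤ n - 1 → (Q j).natDegree ≤ n - 1)
    (hQ : ∀ j, 1 ≤ j → j ≤ n - 1 → ∀ i, 1 ≤ i → i ≤ n →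
      (Q j).eval (l i) = if i ≤ j then 1 else 0)
    (K : ℝ → ℝ → ℝ)
    (hK : ∀ x y, K x y = ∑ j ∈ Finset.Icc 1 (n - 1),
      Set.indicator (Set.Icc (l (j + 1)) (l j)) (fun _ => (1 : ℝ)) x *
        (Polynomial.derivative (Q j)).eval y) :
    (∀ x z : ℝ, (∫ y : ℝ, K x y * K y z) = K x z) ∧
      (∫ y : ℝ, K y y) = (n : ℝ) - 1 := by
  set S := Finset.Icc 1 (n - 1) with hS
  set c : ℕ → ℝ → ℝ := fun j x =>
    Set.indicator (Set.Icc (l (j + 1)) (l j)) (fun _ => (1:ℝ)) x with hc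
  have hdelta : ∀ j ∈ S, ∀ k ∈ S,
      (∫ y : ℝ, (Polynomial.derivative (Q j)).eval y * c k y)
        = if j = k then 1 else 0 := by
    intro j hj k hk
    rw [hS, Finset.mem_Icc] at hj hk
    have hle : l (k + 1) ≤ l k :=
      le_of_lt (hl k (k + 1) hk.1 (by omega) (by omega))
    rw [hc, stmt6_integral _ _ hle,
      hQ j hj.1 hj.2 k hk.1 (by omega), hQ j hj.1 hj.2 (k + 1) (by omega) (by omega)]
    split_ifs <;> norm_num <;> omega
  constructor
  · intro x z
    have expand : (fun y => K x y * K y z) =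
        (fun y => ∑ j ∈ S, ∑ k ∈ S, (c j x * (Polynomial.derivative (Q k)).eval z) *
          ((Polynomial.derivative (Q j)).eval y * c k y)) := by
      funext y
      rw [hK x y, hK y z, Finset.sum_mul_sum]
      exact Finset.sum_congr rfl fun j _ => Finset.sum_congr rfl fun k _ => by ring
    rw [expand, integral_finset_sum]
    · have step : ∀ j ∈ S,
          (∫ y : ℝ, ∑ k ∈ S, (c j x * (Polynomial.derivative (Q k)).eval z) *
            ((Polynomial.derivative (Q j)).eval y * c k y))
          = c j x * (Polynomial.derivative (Q j)).eval z := by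
        intro j hj
        rw [integral_finset_sum]
        · have : ∀ k ∈ S, (∫ y : ℝ, (c j x * (Polynomial.derivative (Q k)).eval z) *
              ((Polynomial.derivative (Q j)).eval y * c k y))
              = (c j x * (Polynomial.derivative (Q k)).eval z) *
                (if j = k then 1 else 0) := by
            intro k hk
            rw [MeasureTheory.integral_const_mul, hdelta j hj k hk]
          rw [Finset.sum_congr rfl this]
          simp only [mul_ite, mul_one, mul_zero]
          rw [Finset.sum_ite_eq S j (fun k => c j x * (Polynomial.derivative (Q k)).eval z)]
          simp [hj]
        · intro k _
          exact ((stmt6_integrable _ _ _).const_mul _)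
      rw [Finset.sum_congr rfl step, hK x z]
    · intro j _
      exact integrable_finset_sum _ fun k _ => ((stmt6_integrable _ _ _).const_mul _)
  · have expand : (fun y => K y y) =
        (fun y => ∑ j ∈ S, (Polynomial.derivative (Q j)).eval y * c j y) := by
      funext y
      rw [hK y y]
      exact Finset.sum_congr rfl fun j _ => by rw [hc]; ring
    rw [expand, integral_finset_sum]
    · have : ∀ j ∈ S, (∫ y : ℝ, (Polynomial.derivative (Q j)).eval y * c j y) = 1 := by
        intro j hj
        rw [hdelta j hj j hj]; simp
      rw [Finset.sum_congr rfl this, Finset.sum_const, nsmul_eq_mul, mul_one,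
        hS, Nat.card_Icc]
      have : n - 1 + 1 - 1 = n - 1 := by omega
      rw [this, Nat.cast_sub hn, Nat.cast_one]
    · intro j _
      exact stmt6_integrable _ _ _
end

section
/- Let h : T → R be a rhombus-concave function on the triangle T = {(i,j) ∈ Z² : 0 ≤ i ≤ j ≤ n} with boundary condition λ ⊞ μ → ν (so h(0,i) = λ_1 + ... + λ_i, h(i,n) = ∑λ + μ_1 + ... + μ_i, h(i,i) = ν_1 + ... + ν_i). Then the Weyl inequality ν_1 ≤ λ_1 + μ_1 holds. -/
open scoped BigOperators

/-- A rhombus-concave function on the triangle `T = {0 ≤ i ≤ j ≤ n}` with boundary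
condition `λ ⊞ μ → ν` satisfies the Weyl inequality `ν_1 ≤ λ_1 + μ_1`. -/
theorem stmt8 (n : ℕ) (hn : 1 ≤ n) (lam mu nu : ℕ → ℝ)
    (hlam : ∀ i j, i ≤ j → j < n → lam j ≤ lam i)
    (hmu : ∀ i j, i ≤ j → j < n → mu j ≤ mu i)
    (hnu : ∀ i j, i ≤ j → j < n → nu j ≤ nu i)
    (h : ℕ → ℕ → ℝ)
    -- rhombus concavity, type (i): ((i,j),(i+1,j),(i+2,j+1),(i+1,j+1))
    (hrc1 : ∀ i j, i + 1 ≤ j → j + 1 ≤ n →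
      h i j + h (i + 2) (j + 1) ≤ h (i + 1) j + h (i + 1) (j + 1))
    -- rhombus concavity, type (ii): ((i,j),(i+1,j+1),(i+1,j+2),(i,j+1))
    (hrc2 : ∀ i j, i ≤ j → j + 2 ≤ n →
      h i j + h (i + 1) (j + 2) ≤ h (i + 1) (j + 1) + h i (j + 1))
    -- rhombus concavity, type (iii): ((i,j+1),(i,j),(i+1,j),(i+1,j+1))
    (hrc3 : ∀ i j, i + 1 ≤ j → j + 1 ≤ n →
      h i (j + 1) + h (i + 1) j ≤ h i j + h (i + 1) (j + 1))
    (hb1 : ∀ i ≤ n, h 0 i = ∑ m ∈ Finset.range i, lam m)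
    (hb2 : ∀ i ≤ n, h i n = (∑ m ∈ Finset.range n, lam m) + ∑ m ∈ Finset.range i, mu m)
    (hb3 : ∀ i ≤ n, h i i = ∑ m ∈ Finset.range i, nu m) :
    nu 0 ≤ lam 0 + mu 0 := by
  have key : ∀ j, 1 ≤ j → j ≤ n → h 1 1 - h 0 1 ≤ h 1 j - h 0 j := by
    intro j
    induction j with
    | zero => intro hj; omega
    | succ k ih =>
      intro _ hkn
      rcases Nat.eq_or_lt_of_le (Nat.one_le_iff_ne_zero.mpr (by omega) : 1 ≤ k + 1) with he | hlt
      · rw [← he]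
      · have hk1 : 1 ≤ k := by omega
        have := hrc3 0 k (by omega) hkn
        have := ih hk1 (by omega)
        linarith
  have hkey := key n hn le_rfl
  have e1 : h 1 1 = nu 0 := by rw [hb3 1 hn, Finset.sum_range_one]
  have e2 : h 0 1 = lam 0 := by rw [hb1 1 hn, Finset.sum_range_one]
  have e3 : h 1 n = (∑ m ∈ Finset.range n, lam m) + mu 0 := by
    rw [hb2 1 hn, Finset.sum_range_one]
  have e4 : h 0 n = ∑ m ∈ Finset.range n, lam m := hb1 n le_rfl
  rw [e1, e2, e3, e4] at hkey
  linarith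
end

section
/- Let λ ∈ R^n be strictly decreasing, a ∈ R^n, and let Λ ∈ R^n be strictly decreasing with large gaps in the sense that min_{1 ≤ i < n} (Λ_i − Λ_{i+1}) > λ_1 − λ_n. Then the map sending a Gelfand–Tsetlin pattern (λ_{j,k})_{1 ≤ j ≤ k ≤ n} with boundary diag(λ) → a to the function h : T → R defined by h(i,j) = Λ_1 + ... + Λ_j + λ_{1,j} + ... + λ_{i,j} produces a rhombus-concave function (a hive) with boundary condition Λ ⊞ λ → Λ + a, and this map is a bijection onto the set of such hives. -/
open scoped BigOperators

lemma tele10 (f : ℕ → ℝ) : ∀ k, ∑ j ∈ Finset.Icc 1 k, (f j - f (j - 1)) = f k - f 0 := by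
  intro k
  induction k with
  | zero => simp
  | succ k ih =>
    rw [Finset.sum_Icc_succ_top (by omega), ih]
    simp

lemma shift10 (f : ℕ → ℝ) (i : ℕ) :
    ∑ m ∈ Finset.Icc 1 (i + 1), f m = f 1 + ∑ m ∈ Finset.Icc 1 i, f (m + 1) := by
  induction i with
  | zero => simp
  | succ i ih =>
    rw [Finset.sum_Icc_succ_top (by omega), ih, Finset.sum_Icc_succ_top (by omega : 1 ≤ i + 1)]
    ring

lemma bounds10 (n : ℕ) (lam : ℕ → ℝ) (g : ℕ → ℕ → ℝ)
    (hlam : ∀ i j, 1 ≤ i → i < j → j ≤ n → lam j < lam i)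
    (hGT : ∀ j k, 1 ≤ j → j ≤ k → k ≤ n - 1 →
      g j k ≤ g j (k + 1) ∧ g (j + 1) (k + 1) ≤ g j k)
    (hbn : ∀ j, 1 ≤ j → j ≤ n → g j n = lam j) :
    ∀ d k m, k + d = n → 1 ≤ m → m ≤ k → lam n ≤ g m k ∧ g m k ≤ lam 1 := by
  intro d
  induction d with
  | zero =>
    intro k m hk hm1 hmk
    have hkn : k = n := by omega
    subst hkn
    rw [hbn m hm1 hmk]
    constructor
    · rcases eq_or_lt_of_le hmk with h | h
      · rw [h]
      · exact le_of_lt (hlam m k hm1 h le_rfl)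
    · rcases eq_or_lt_of_le hm1 with h | h
      · rw [← h]
      · exact le_of_lt (hlam 1 m le_rfl h hmk)
  | succ d ih =>
    intro k m hk hm1 hmk
    have hk1 : k ≤ n - 1 := by omega
    have h1 := hGT m k hm1 hmk hk1
    constructor
    · have := (ih (k + 1) (m + 1) (by omega) (by omega) (by omega)).1
      linarith [h1.2]
    · have := (ih (k + 1) m (by omega) hm1 (by omega)).2
      linarith [h1.1]

/-- For `Λ` strictly decreasing with large gaps, the map
`g ↦ (h(i,j) = Λ_1 + ... + Λ_j + g_{1,j} + ... + g_{i,j})` is a bijection from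
Gelfand–Tsetlin patterns with boundary `diag(λ) → a` onto hives (rhombus-concave
functions on `T`) with boundary condition `Λ ⊞ λ → Λ + a`.  (Patterns and hives are
normalized to vanish outside their respective index domains.) -/
theorem stmt10 (n : ℕ) (hn : 1 ≤ n) (lam a Lam : ℕ → ℝ)
    (hlam : ∀ i j, 1 ≤ i → i < j → j ≤ n → lam j < lam i)
    (hLam : ∀ i j, 1 ≤ i → i < j → j ≤ n → Lam j < Lam i)
    (hgap : ∀ i, 1 ≤ i → i < n → lam 1 - lam n < Lam i - Lam (i + 1)) :
    Set.BijOn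
      (fun (g : ℕ → ℕ → ℝ) (i j : ℕ) =>
        if i ≤ j ∧ j ≤ n then
          (∑ m ∈ Finset.Icc 1 j, Lam m) + ∑ m ∈ Finset.Icc 1 i, g m j
        else 0)
      -- Gelfand–Tsetlin patterns with boundary diag(λ) → a
      {g : ℕ → ℕ → ℝ |
        (∀ j k, 1 ≤ j → j ≤ k → k ≤ n - 1 →
          g j k ≤ g j (k + 1) ∧ g (j + 1) (k + 1) ≤ g j k) ∧
        (∀ j, 1 ≤ j → j ≤ n → g j n = lam j) ∧
        (∀ k, 1 ≤ k → k ≤ n →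
          (∑ j ∈ Finset.Icc 1 k, g j k) = ∑ j ∈ Finset.Icc 1 k, a j) ∧
        (∀ j k, ¬(1 ≤ j ∧ j ≤ k ∧ k ≤ n) → g j k = 0)}
      -- hives with boundary condition Λ ⊞ λ → Λ + a
      {h : ℕ → ℕ → ℝ |
        (∀ i j, i + 1 ≤ j → j + 1 ≤ n →
          h i j + h (i + 2) (j + 1) ≤ h (i + 1) j + h (i + 1) (j + 1)) ∧
        (∀ i j, i ≤ j → j + 2 ≤ n →
          h i j + h (i + 1) (j + 2) ≤ h (i + 1) (j + 1) + h i (j + 1)) ∧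
        (∀ i j, i + 1 ≤ j → j + 1 ≤ n →
          h i (j + 1) + h (i + 1) j ≤ h i j + h (i + 1) (j + 1)) ∧
        (∀ i, i ≤ n → h 0 i = ∑ m ∈ Finset.Icc 1 i, Lam m) ∧
        (∀ i, i ≤ n → h i n =
          (∑ m ∈ Finset.Icc 1 n, Lam m) + ∑ m ∈ Finset.Icc 1 i, lam m) ∧
        (∀ i, i ≤ n → h i i = ∑ m ∈ Finset.Icc 1 i, (Lam m + a m)) ∧
        (∀ i j, ¬(i ≤ j ∧ j ≤ n) → h i j = 0)} := by
  refine ⟨?_, ?_, ?_⟩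
  · -- MapsTo
    intro g hg
    obtain ⟨hGT, hbn, hsum, hz⟩ := hg
    refine ⟨?_, ?_, ?_, ?_, ?_, ?_, ?_⟩
    · -- R1
      intro i j hij hjn
      simp only
      rw [if_pos (⟨by omega, by omega⟩ : i ≤ j ∧ j ≤ n),
        if_pos (⟨by omega, by omega⟩ : i + 2 ≤ j + 1 ∧ j + 1 ≤ n),
        if_pos (⟨by omega, by omega⟩ : i + 1 ≤ j ∧ j ≤ n),
        if_pos (⟨by omega, by omega⟩ : i + 1 ≤ j + 1 ∧ j + 1 ≤ n)]
      have s1 : ∑ m ∈ Finset.Icc 1 (i + 1), g m j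
          = (∑ m ∈ Finset.Icc 1 i, g m j) + g (i + 1) j :=
        Finset.sum_Icc_succ_top (by omega) _
      have s2 : ∑ m ∈ Finset.Icc 1 (i + 1 + 1), g m (j + 1)
          = (∑ m ∈ Finset.Icc 1 (i + 1), g m (j + 1)) + g (i + 1 + 1) (j + 1) :=
        Finset.sum_Icc_succ_top (by omega) _
      rw [show i + 2 = i + 1 + 1 from rfl, s2, s1]
      have := (hGT (i + 1) j (by omega) hij (by omega)).2
      linarith
    · -- R2
      intro i j hij hjn
      simp only
      rw [if_pos (⟨by omega, by omega⟩ : i ≤ j ∧ j ≤ n),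
        if_pos (⟨by omega, by omega⟩ : i + 1 ≤ j + 2 ∧ j + 2 ≤ n),
        if_pos (⟨by omega, by omega⟩ : i + 1 ≤ j + 1 ∧ j + 1 ≤ n),
        if_pos (⟨by omega, by omega⟩ : i ≤ j + 1 ∧ j + 1 ≤ n)]
      have s2 : ∑ m ∈ Finset.Icc 1 (i + 1), g m (j + 2)
          = g 1 (j + 2) + ∑ m ∈ Finset.Icc 1 i, g (m + 1) (j + 2) := shift10 _ i
      have s3 : ∑ m ∈ Finset.Icc 1 i, g (m + 1) (j + 2) ≤ ∑ m ∈ Finset.Icc 1 i, g m (j + 1) := by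
        refine Finset.sum_le_sum fun m hm => ?_
        have hm' := Finset.mem_Icc.mp hm
        exact (hGT m (j + 1) hm'.1 (by omega) (by omega)).2
      have s4 : ∑ m ∈ Finset.Icc 1 i, g m j ≤ ∑ m ∈ Finset.Icc 1 i, g m (j + 1) := by
        refine Finset.sum_le_sum fun m hm => ?_
        have hm' := Finset.mem_Icc.mp hm
        exact (hGT m j hm'.1 (by omega) (by omega)).1
      have s5 : ∑ m ∈ Finset.Icc 1 (i + 1), g m (j + 1)
          = (∑ m ∈ Finset.Icc 1 i, g m (j + 1)) + g (i + 1) (j + 1) :=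
        Finset.sum_Icc_succ_top (by omega) _
      have b1 : g 1 (j + 2) ≤ lam 1 :=
        (bounds10 n lam g hlam hGT hbn (n - (j + 2)) (j + 2) 1 (by omega) le_rfl (by omega)).2
      have b2 : lam n ≤ g (i + 1) (j + 1) :=
        (bounds10 n lam g hlam hGT hbn (n - (j + 1)) (j + 1) (i + 1) (by omega) (by omega)
          (by omega)).1
      have gap := hgap (j + 1) (by omega) (by omega)
      have LA : ∑ m ∈ Finset.Icc 1 (j + 1), Lam m
          = (∑ m ∈ Finset.Icc 1 j, Lam m) + Lam (j + 1) :=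
        Finset.sum_Icc_succ_top (by omega) _
      have LB : ∑ m ∈ Finset.Icc 1 (j + 1 + 1), Lam m
          = (∑ m ∈ Finset.Icc 1 (j + 1), Lam m) + Lam (j + 1 + 1) :=
        Finset.sum_Icc_succ_top (by omega) _
      rw [show j + 2 = j + 1 + 1 from rfl] at *
      linarith
    · -- R3
      intro i j hij hjn
      simp only
      rw [if_pos (⟨by omega, by omega⟩ : i ≤ j + 1 ∧ j + 1 ≤ n),
        if_pos (⟨by omega, by omega⟩ : i + 1 ≤ j ∧ j ≤ n),
        if_pos (⟨by omega, by omega⟩ : i ≤ j ∧ j ≤ n),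
        if_pos (⟨by omega, by omega⟩ : i + 1 ≤ j + 1 ∧ j + 1 ≤ n)]
      have s1 : ∑ m ∈ Finset.Icc 1 (i + 1), g m j
          = (∑ m ∈ Finset.Icc 1 i, g m j) + g (i + 1) j :=
        Finset.sum_Icc_succ_top (by omega) _
      have s2 : ∑ m ∈ Finset.Icc 1 (i + 1), g m (j + 1)
          = (∑ m ∈ Finset.Icc 1 i, g m (j + 1)) + g (i + 1) (j + 1) :=
        Finset.sum_Icc_succ_top (by omega) _
      have := (hGT (i + 1) j (by omega) hij (by omega)).1
      rw [s1, s2]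
      linarith
    · -- h 0 i
      intro i hi
      simp only
      rw [if_pos ⟨Nat.zero_le i, hi⟩]
      simp
    · -- h i n
      intro i hi
      simp only
      rw [if_pos ⟨hi, le_rfl⟩]
      congr 1
      refine Finset.sum_congr rfl fun m hm => ?_
      have hm' := Finset.mem_Icc.mp hm
      exact hbn m hm'.1 (by omega)
    · -- h i i
      intro i hi
      simp only
      rw [if_pos ⟨le_rfl, hi⟩]
      rcases Nat.eq_zero_or_pos i with h0 | h0
      · subst h0; simp
      · rw [Finset.sum_add_distrib, hsum i h0 hi]
    · -- outside
      intro i j hc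
      simp only
      rw [if_neg hc]
  · -- InjOn
    intro g1 h1 g2 h2 heq
    funext i j
    by_cases hc : 1 ≤ i ∧ i ≤ j ∧ j ≤ n
    · obtain ⟨i', rfl⟩ : ∃ i', i = i' + 1 := ⟨i - 1, by omega⟩
      have e1 := congrFun (congrFun heq (i' + 1)) j
      have e0 := congrFun (congrFun heq i') j
      simp only [if_pos (show i' + 1 ≤ j ∧ j ≤ n from ⟨by omega, by omega⟩)] at e1
      simp only [if_pos (show i' ≤ j ∧ j ≤ n from ⟨by omega, by omega⟩)] at e0
      have sa : ∑ m ∈ Finset.Icc 1 (i' + 1), g1 m j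
          = (∑ m ∈ Finset.Icc 1 i', g1 m j) + g1 (i' + 1) j :=
        Finset.sum_Icc_succ_top (by omega) _
      have sb : ∑ m ∈ Finset.Icc 1 (i' + 1), g2 m j
          = (∑ m ∈ Finset.Icc 1 i', g2 m j) + g2 (i' + 1) j :=
        Finset.sum_Icc_succ_top (by omega) _
      rw [sa, sb] at e1
      linarith
    · rw [h1.2.2.2 i j hc, h2.2.2.2 i j hc]
  · -- SurjOn
    intro h hh
    obtain ⟨R1, R2, R3, B0, Bn, Bd, Bz⟩ := hh
    refine ⟨fun i j => if 1 ≤ i ∧ i ≤ j ∧ j ≤ n then h i j - h (i - 1) j else 0,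
      ⟨?_, ?_, ?_, ?_⟩, ?_⟩
    · -- GT interlacing
      intro j k hj hjk hkn
      obtain ⟨j', rfl⟩ : ∃ j', j = j' + 1 := ⟨j - 1, by omega⟩
      simp only
      constructor
      · rw [if_pos (⟨by omega, by omega, by omega⟩ : 1 ≤ j' + 1 ∧ j' + 1 ≤ k ∧ k ≤ n),
          if_pos (⟨by omega, by omega, by omega⟩ : 1 ≤ j' + 1 ∧ j' + 1 ≤ k + 1 ∧ k + 1 ≤ n)]
        simp only [Nat.add_sub_cancel]
        have := R3 j' k (by omega) (by omega)
        linarith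
      · rw [if_pos (⟨by omega, by omega, by omega⟩ :
            1 ≤ j' + 1 + 1 ∧ j' + 1 + 1 ≤ k + 1 ∧ k + 1 ≤ n),
          if_pos (⟨by omega, by omega, by omega⟩ : 1 ≤ j' + 1 ∧ j' + 1 ≤ k ∧ k ≤ n)]
        simp only [Nat.add_sub_cancel]
        have := R1 j' k (by omega) (by omega)
        linarith
    · -- boundary at n
      intro j hj hjn
      obtain ⟨j', rfl⟩ : ∃ j', j = j' + 1 := ⟨j - 1, by omega⟩
      simp only
      rw [if_pos (⟨by omega, by omega, le_rfl⟩ : 1 ≤ j' + 1 ∧ j' + 1 ≤ n ∧ n ≤ n)]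
      simp only [Nat.add_sub_cancel]
      have e1 := Bn (j' + 1) hjn
      have e0 := Bn j' (by omega)
      have s : ∑ m ∈ Finset.Icc 1 (j' + 1), lam m
          = (∑ m ∈ Finset.Icc 1 j', lam m) + lam (j' + 1) :=
        Finset.sum_Icc_succ_top (by omega) _
      rw [e1, e0, s]
      ring
    · -- sums
      intro k hk hkn
      have e : ∀ m ∈ Finset.Icc 1 k,
          (if 1 ≤ m ∧ m ≤ k ∧ k ≤ n then h m k - h (m - 1) k else 0)
            = (fun p => h p k) m - (fun p => h p k) (m - 1) := by
        intro m hm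
        have hm' := Finset.mem_Icc.mp hm
        rw [if_pos ⟨hm'.1, hm'.2, hkn⟩]
      rw [Finset.sum_congr rfl e, tele10 (fun p => h p k) k]
      rw [Bd k hkn, B0 k hkn, Finset.sum_add_distrib]
      ring
    · -- zero outside
      intro j k hc
      simp only
      rw [if_neg hc]
    · -- map back
      funext i j
      simp only
      by_cases hd : i ≤ j ∧ j ≤ n
      · rw [if_pos hd]
        have e : ∀ m ∈ Finset.Icc 1 i,
            (if 1 ≤ m ∧ m ≤ j ∧ j ≤ n then h m j - h (m - 1) j else 0)
              = (fun p => h p j) m - (fun p => h p j) (m - 1) := by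
          intro m hm
          have hm' := Finset.mem_Icc.mp hm
          rw [if_pos ⟨hm'.1, by omega, hd.2⟩]
        rw [Finset.sum_congr rfl e, tele10 (fun p => h p j) i]
        rw [B0 j hd.2]
        ring
      · rw [if_neg hd, Bz i j hd]
end
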